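/- Let μ be a finite nonnegative measure on [0,∞) with total mass |μ| > 0 and μ((0,∞)) > 0, φ(z) = ∫₀^∞ e^{-tz} dμ(t), and Δ₁ > Δ₂ > 0. If β₁ ≥ 0 satisfies (1/|μ|)∫₀^∞ e^{-4β₁² t} dμ(t) < (Δ₁² − Δ₂²)/(Δ₁² + Δ₂²), then for every β₂ > 0: L_Δ(β₁, β₂) < L_Δ(β₁, 0), where L_Δ(β) = (φ(0) − φ(4β₁² + 4β₂²))(Δ₁² + Δ₂²) − (φ(4β₁²) − φ(4β₂²))(Δ₁² − Δ₂²). -/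

import Mathlib

/-!
Write a = 4β₁², b = 4β₂², S = Δ₁² + Δ₂², D = Δ₁² − Δ₂². The gap L_Δ(β₁, 0) − L_Δ(β₁, β₂) equals
∫ (1 − e^{−tb})(D − S e^{−ta}) dμ(t). Both factors are nondecreasing in t, so Chebyshev's integral
inequality bounds |μ| times this integral from below by ∫ (1 − e^{−tb}) dμ · ∫ (D − S e^{−ta}) dμ.
The first factor is positive because μ charges (0, ∞), the second is the hypothesis on β₁.
-/

open MeasureTheory

/-- φ(z) = ∫₀^∞ e^{-tz} dμ(t). -/
noncomputable def phi (μ : Measure ℝ) (z : ℝ) : ℝ := ∫ t, Real.exp (-(t * z)) ∂μ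

/-- L_Δ(β) = (φ(0) − φ(4β₁² + 4β₂²))(Δ₁² + Δ₂²) − (φ(4β₁²) − φ(4β₂²))(Δ₁² − Δ₂²). -/
noncomputable def L (φ : ℝ → ℝ) (Δ₁ Δ₂ β₁ β₂ : ℝ) : ℝ :=
  (φ 0 - φ (4 * β₁ ^ 2 + 4 * β₂ ^ 2)) * (Δ₁ ^ 2 + Δ₂ ^ 2)
    - (φ (4 * β₁ ^ 2) - φ (4 * β₂ ^ 2)) * (Δ₁ ^ 2 - Δ₂ ^ 2)

open Real Set

theorem Monovary.integral_mul_integral_le {α : Type*} [MeasurableSpace α] {μ : Measure α}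
    [IsFiniteMeasure μ] {f g : α → ℝ} (hfg : Monovary f g) (hf : Integrable f μ)
    (hg : Integrable g μ) (hfg_int : Integrable (fun x ↦ f x * g x) μ) :
    (∫ x, f x ∂μ) * ∫ x, g x ∂μ ≤ μ.real univ * ∫ x, f x * g x ∂μ := by
  have hpoint (x : α) :
      f x * ∫ y, g y ∂μ + g x * ∫ y, f y ∂μ ≤ μ.real univ * (f x * g x) + ∫ y, f y * g y ∂μ := by
    have := integral_mono (f := fun y ↦ f x * g y + g x * f y)
      (g := fun y ↦ f x * g x + f y * g y) ((hg.const_mul _).add (hf.const_mul _))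
      ((integrable_const _).add hfg_int)
      fun y ↦ (hfg.mul_add_mul_le_mul_add_mul x y).trans_eq' (by ring)
    rwa [integral_add (hg.const_mul _) (hf.const_mul _), integral_add (integrable_const _) hfg_int,
      integral_const_mul, integral_const_mul, integral_const, smul_eq_mul] at this
  have := integral_mono (f := fun x ↦ f x * ∫ y, g y ∂μ + g x * ∫ y, f y ∂μ)
    (g := fun x ↦ μ.real univ * (f x * g x) + ∫ y, f y * g y ∂μ)
    ((hf.mul_const _).add (hg.mul_const _)) ((hfg_int.const_mul _).add (integrable_const _)) hpoint
  rw [integral_add (hf.mul_const _) (hg.mul_const _),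
    integral_add (hfg_int.const_mul _) (integrable_const _), integral_mul_const, integral_mul_const,
    integral_const_mul, integral_const, smul_eq_mul] at this
  linarith

section Laplace

variable {μ : Measure ℝ}

theorem ae_nonneg_of_measure_Iio_eq_zero (hμ : μ (Iio 0) = 0) : ∀ᵐ t ∂μ, 0 ≤ t :=
  ae_iff.2 <| by simp only [not_le]; exact hμ

theorem integrable_exp_neg_mul [IsFiniteMeasure μ] (hμ : μ (Iio 0) = 0) {c : ℝ} (hc : 0 ≤ c) :
    Integrable (fun t ↦ exp (-(t * c))) μ := by
  refine (integrable_const (1 : ℝ)).mono' (by fun_prop) ?_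
  filter_upwards [ae_nonneg_of_measure_Iio_eq_zero hμ] with t ht
  rw [norm_of_nonneg (exp_pos _).le, exp_le_one_iff, neg_nonpos]
  exact mul_nonneg ht hc

theorem phi_zero : phi μ 0 = μ.real univ := by
  simp [phi]

theorem integrable_exp_neg_mul_sub [IsFiniteMeasure μ] (hμ : μ (Iio 0) = 0) {c d : ℝ}
    (hc : 0 ≤ c) (hd : 0 ≤ d) : Integrable (fun t ↦ exp (-(t * c)) - exp (-(t * d))) μ :=
  (integrable_exp_neg_mul hμ hc).sub (integrable_exp_neg_mul hμ hd)

theorem integral_exp_neg_mul_sub [IsFiniteMeasure μ] (hμ : μ (Iio 0) = 0) {c d : ℝ} (hc : 0 ≤ c)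
    (hd : 0 ≤ d) : ∫ t, (exp (-(t * c)) - exp (-(t * d))) ∂μ = phi μ c - phi μ d :=
  integral_sub (integrable_exp_neg_mul hμ hc) (integrable_exp_neg_mul hμ hd)

theorem phi_strictAntiOn [IsFiniteMeasure μ] (hμ : μ (Iio 0) = 0) (hpos : 0 < μ (Ioi 0)) :
    StrictAntiOn (phi μ) (Ici 0) := by
  intro a (ha : 0 ≤ a) b (hb : 0 ≤ b) hab
  rw [← sub_pos, ← integral_exp_neg_mul_sub hμ ha hb,
    integral_pos_iff_support_of_nonneg_ae _ (integrable_exp_neg_mul_sub hμ ha hb)]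
  · refine hpos.trans_le (measure_mono fun t (ht : 0 < t) ↦ ?_)
    exact (sub_pos.2 (exp_lt_exp.2 (by nlinarith))).ne'
  · filter_upwards [ae_nonneg_of_measure_Iio_eq_zero hμ] with t ht
    exact sub_nonneg.2 (exp_le_exp.2 (by nlinarith))

theorem one_sub_exp_mul_sub_exp (t a b D S : ℝ) :
    (1 - exp (-(t * b))) * (D - S * exp (-(t * a)))
      = D * (exp (-(t * 0)) - exp (-(t * b))) - S * (exp (-(t * a)) - exp (-(t * (a + b)))) := by
  rw [show -(t * (a + b)) = -(t * a) + -(t * b) by ring, exp_add]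
  simp only [mul_zero, neg_zero, exp_zero]
  ring

theorem integral_one_sub_exp_mul_sub_exp [IsFiniteMeasure μ] (hμ : μ (Iio 0) = 0) {a b : ℝ}
    (ha : 0 ≤ a) (hb : 0 ≤ b) (D S : ℝ) :
    ∫ t, (1 - exp (-(t * b))) * (D - S * exp (-(t * a))) ∂μ
      = D * (phi μ 0 - phi μ b) - S * (phi μ a - phi μ (a + b)) := by
  simp_rw [one_sub_exp_mul_sub_exp]
  rw [integral_sub ((integrable_exp_neg_mul_sub hμ le_rfl hb).const_mul D)
      ((integrable_exp_neg_mul_sub hμ ha (add_nonneg ha hb)).const_mul S),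
    integral_const_mul, integral_const_mul, integral_exp_neg_mul_sub hμ le_rfl hb,
    integral_exp_neg_mul_sub hμ ha (add_nonneg ha hb)]

theorem phi_sub_mul_le_phi_zero_mul [IsFiniteMeasure μ] (hμ : μ (Iio 0) = 0) {a b : ℝ}
    (ha : 0 ≤ a) (hb : 0 ≤ b) (D : ℝ) {S : ℝ} (hS : 0 ≤ S) :
    (phi μ 0 - phi μ b) * (D * phi μ 0 - S * phi μ a)
      ≤ phi μ 0 * (D * (phi μ 0 - phi μ b) - S * (phi μ a - phi μ (a + b))) := by
  have hf : Monotone fun t : ℝ ↦ 1 - exp (-(t * b)) := fun x y hxy ↦ by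
    dsimp only
    gcongr
  have hg : Monotone fun t : ℝ ↦ D - S * exp (-(t * a)) := fun x y hxy ↦ by
    dsimp only
    gcongr
  have hf_int : Integrable (fun t ↦ 1 - exp (-(t * b))) μ :=
    (integrable_const 1).sub (integrable_exp_neg_mul hμ hb)
  have hg_int : Integrable (fun t ↦ D - S * exp (-(t * a))) μ :=
    (integrable_const D).sub ((integrable_exp_neg_mul hμ ha).const_mul S)
  have hfg_int : Integrable (fun t ↦ (1 - exp (-(t * b))) * (D - S * exp (-(t * a)))) μ := by
    simp_rw [one_sub_exp_mul_sub_exp]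
    exact ((integrable_exp_neg_mul_sub hμ le_rfl hb).const_mul D).sub
      ((integrable_exp_neg_mul_sub hμ ha (add_nonneg ha hb)).const_mul S)
  have hcheb := (hf.monovary hg).integral_mul_integral_le hf_int hg_int hfg_int
  rwa [integral_one_sub_exp_mul_sub_exp hμ ha hb, integral_sub (integrable_const 1)
    (integrable_exp_neg_mul hμ hb), integral_sub (integrable_const D)
    ((integrable_exp_neg_mul hμ ha).const_mul S), integral_const_mul, integral_const,
    integral_const, smul_eq_mul, smul_eq_mul, mul_one, ← phi_zero, mul_comm (phi μ 0) D] at hcheb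

end Laplace

theorem L_zero_sub_L (φ : ℝ → ℝ) (Δ₁ Δ₂ β₁ β₂ : ℝ) :
    L φ Δ₁ Δ₂ β₁ 0 - L φ Δ₁ Δ₂ β₁ β₂ = (Δ₁ ^ 2 - Δ₂ ^ 2) * (φ 0 - φ (4 * β₂ ^ 2))
      - (Δ₁ ^ 2 + Δ₂ ^ 2) * (φ (4 * β₁ ^ 2) - φ (4 * β₁ ^ 2 + 4 * β₂ ^ 2)) := by
  simp only [L, zero_pow two_ne_zero, mul_zero, add_zero]
  ring

theorem stmt12_general (μ : Measure ℝ) [IsFiniteMeasure μ] (hsupp : μ (Set.Iio 0) = 0)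
    (hmass : 0 < (μ Set.univ).toReal) (hpos : 0 < μ (Set.Ioi 0))
    (Δ₁ Δ₂ : ℝ) (h2 : 0 < Δ₂) (β₁ : ℝ)
    (hcond : (1 / (μ Set.univ).toReal) * ∫ t, Real.exp (-(4 * β₁ ^ 2 * t)) ∂μ
      < (Δ₁ ^ 2 - Δ₂ ^ 2) / (Δ₁ ^ 2 + Δ₂ ^ 2)) :
    ∀ β₂ : ℝ, 0 < β₂ → L (phi μ) Δ₁ Δ₂ β₁ β₂ < L (phi μ) Δ₁ Δ₂ β₁ 0 := by
  intro β₂ hβ₂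
  have hS : 0 < Δ₁ ^ 2 + Δ₂ ^ 2 := by positivity
  rw [← measureReal_def, ← phi_zero] at hmass hcond
  rw [show ∫ t, exp (-(4 * β₁ ^ 2 * t)) ∂μ = phi μ (4 * β₁ ^ 2) by simp only [phi, mul_comm],
    one_div_mul_eq_div, div_lt_div_iff₀ hmass hS] at hcond
  have hf : 0 < phi μ 0 - phi μ (4 * β₂ ^ 2) :=
    sub_pos.2 (phi_strictAntiOn hsupp hpos self_mem_Ici (mem_Ici.2 (by positivity))
      (by positivity))
  have hg : 0 < (Δ₁ ^ 2 - Δ₂ ^ 2) * phi μ 0 - (Δ₁ ^ 2 + Δ₂ ^ 2) * phi μ (4 * β₁ ^ 2) := by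
    linarith
  rw [← sub_pos, L_zero_sub_L]
  exact pos_of_mul_pos_right ((mul_pos hf hg).trans_le
    (phi_sub_mul_le_phi_zero_mul hsupp (by positivity) (by positivity) _ hS.le)) hmass.le

/-- if (1/|μ|)∫₀^∞ e^{-4β₁²t} dμ(t) < (Δ₁² − Δ₂²)/(Δ₁² + Δ₂²), then setting the
weight of the weaker feature to zero increases L_Δ: L_Δ(β₁,β₂) < L_Δ(β₁,0) for all β₂ > 0. -/
theorem stmt12 (μ : Measure ℝ) [IsFiniteMeasure μ] (hsupp : μ (Set.Iio 0) = 0)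
    (hmass : 0 < (μ Set.univ).toReal) (hpos : 0 < μ (Set.Ioi 0))
    (Δ₁ Δ₂ : ℝ) (h12 : Δ₂ < Δ₁) (h2 : 0 < Δ₂) (β₁ : ℝ) (hβ₁ : 0 ≤ β₁)
    (hcond : (1 / (μ Set.univ).toReal) * ∫ t, Real.exp (-(4 * β₁ ^ 2 * t)) ∂μ
      < (Δ₁ ^ 2 - Δ₂ ^ 2) / (Δ₁ ^ 2 + Δ₂ ^ 2)) :
    ∀ β₂ : ℝ, 0 < β₂ → L (phi μ) Δ₁ Δ₂ β₁ β₂ < L (phi μ) Δ₁ Δ₂ β₁ 0 :=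
  stmt12_general μ hsupp hmass hpos Δ₁ Δ₂ h2 β₁ hcond
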